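/- If {γ_k} is a classical multiplier sequence, then either all nonzero terms of the sequence have the same sign, or the terms alternate in sign (i.e., γ_k γ_{k+2} ≥ 0 for all k). -/

import Mathlib

open Polynomial

/-- A real polynomial has only real zeros: either it is the zero polynomial
(by convention), or every complex root is real. -/
def RealRooted (p : Polynomial ℝ) : Prop :=
  p = 0 ∨ ∀ z : ℂ, Polynomial.aeval z p = 0 → z.im = 0

/-- A simple set of polynomials: deg b_k = k for all k. -/
def SimpleSet (B : ℕ → Polynomial ℝ) : Prop :=
  ∀ k, (B k).degree = (k : ℕ)

/-- γ is a B-multiplier sequence: applying γ to B-expansion coefficients of any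
polynomial with only real zeros yields a polynomial with only real zeros. -/
def IsMultSeq (B : ℕ → Polynomial ℝ) (γ : ℕ → ℝ) : Prop :=
  ∀ (n : ℕ) (a : ℕ → ℝ),
    RealRooted (∑ k ∈ Finset.range (n + 1), Polynomial.C (a k) * B k) →
    RealRooted (∑ k ∈ Finset.range (n + 1), Polynomial.C (a k * γ k) * B k)

/-- A classical multiplier sequence: multiplier sequence for the standard basis. -/
def ClassicalMS (γ : ℕ → ℝ) : Prop :=
  IsMultSeq (fun k => Polynomial.X ^ k) γ

/-!
The multiplier sends the real-rooted `X^k (X^2 - 1)` to `X^k (γ_{k+2} X^2 - γ_k)`, which is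
real-rooted only if `γ_k γ_{k+2} ≥ 0`. If `γ_j` and `γ_{j+d}` (`d ≥ 2`) were nonzero with all
terms in between zero, it would send the real-rooted `X^j (X + 1)^d` to
`X^j (γ_j + γ_{j+d} X^d)`, which has a non-real root (for `d = 2` by the first fact). So the
nonzero terms occupy consecutive indices, and there terms two apart have the same sign: the sign
of a nonzero term depends only on the parity of its index. A single positive product
`γ_m γ_{m+1}` then forces all nonzero terms to share one sign.
-/

open Finset Real

lemma mul_pos_of_mul_pos_of_mul_pos {x y z : ℝ} (hxy : 0 < x * y) (hyz : 0 < y * z) :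
    0 < x * z :=
  pos_of_mul_pos_left (a := x * z) (b := y * y)
    (by linarith [mul_pos hxy hyz, show x * y * (y * z) = x * z * (y * y) by ring])
    (mul_self_nonneg y)

lemma RealRooted.mul {p q : ℝ[X]} (hp : RealRooted p) (hq : RealRooted q) :
    RealRooted (p * q) := by
  rcases hp with rfl | hp
  · exact Or.inl (zero_mul q)
  rcases hq with rfl | hq
  · exact Or.inl (mul_zero p)
  refine Or.inr fun z hz => ?_
  rw [map_mul, mul_eq_zero] at hz
  exact hz.elim (hp z) (hq z)

lemma RealRooted.pow {p : ℝ[X]} (hp : RealRooted p) (n : ℕ) : RealRooted (p ^ n) := by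
  induction n with
  | zero => exact Or.inr fun z hz => by simp at hz
  | succ n ih => rw [pow_succ]; exact ih.mul hp

lemma realRooted_X_sub_C (r : ℝ) : RealRooted (X - C r) :=
  Or.inr fun z hz => by
    rw [map_sub, aeval_X, aeval_C, sub_eq_zero] at hz
    simp [hz]

lemma realRooted_X : RealRooted X := by
  simpa using realRooted_X_sub_C 0

lemma realRooted_X_add_C (r : ℝ) : RealRooted (X + C r) := by
  simpa [sub_eq_add_neg] using realRooted_X_sub_C (-r)

lemma Complex.exists_pow_eq_and_im_ne_zero {x : ℂ} (hx : x ≠ 0) {d : ℕ} (hd : 3 ≤ d) :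
    ∃ z : ℂ, z ^ d = x ∧ z.im ≠ 0 := by
  obtain ⟨z, hz⟩ := IsAlgClosed.exists_pow_nat_eq x (by omega : 0 < d)
  by_cases him : z.im = 0
  · -- rotating a real root by `exp (2πi / d)` gives a non-real one
    have hre : z.re ≠ 0 := fun hre => hx <| by
      rw [← hz, Complex.ext (z := z) (w := 0) hre him, zero_pow (by omega)]
    have hsin : 0 < Real.sin (2 * π / d) := by
      apply Real.sin_pos_of_pos_of_lt_pi (by positivity)
      rw [div_lt_iff₀ (by positivity)]
      nlinarith [pi_pos, show (3 : ℝ) ≤ d by exact_mod_cast hd]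
    set ζ := Complex.exp ((2 * π / d : ℝ) * Complex.I)
    have hζ : ζ ^ d = 1 := by
      rw [← Complex.exp_nat_mul, ← Complex.exp_two_pi_mul_I]
      have hd0 : (d : ℂ) ≠ 0 := by exact_mod_cast (by omega : d ≠ 0)
      congr 1
      push_cast
      field_simp
    refine ⟨ζ * z, by rw [mul_pow, hz, hζ, one_mul], ?_⟩
    rw [Complex.mul_im, him, mul_zero, zero_add, Complex.exp_ofReal_mul_I_im]
    exact mul_ne_zero hsin.ne' hre
  · exact ⟨z, hz, him⟩

lemma exists_pow_eq_ofReal_and_im_ne_zero {x : ℝ} {d : ℕ} (h : 3 ≤ d ∧ x ≠ 0 ∨ d = 2 ∧ x < 0) :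
    ∃ z : ℂ, z ^ d = x ∧ z.im ≠ 0 := by
  rcases h with ⟨hd, hx⟩ | ⟨rfl, hx⟩
  · exact Complex.exists_pow_eq_and_im_ne_zero (Complex.ofReal_ne_zero.2 hx) hd
  · obtain ⟨z, hz⟩ := IsAlgClosed.exists_pow_nat_eq (x : ℂ) two_pos
    refine ⟨z, hz, fun him => ?_⟩
    have hz_re : (z.re : ℂ) = z := Complex.ext rfl (by simp [him])
    have hre : z.re ^ 2 = x := by exact_mod_cast hz_re ▸ hz
    nlinarith [sq_nonneg z.re]

lemma not_realRooted_C_mul_X_pow_add_C_mul_X_pow {c₀ c₁ : ℝ} (h₀ : c₀ ≠ 0) (h₁ : c₁ ≠ 0)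
    (j : ℕ) {d : ℕ} (hd : 3 ≤ d ∨ d = 2 ∧ 0 < c₀ * c₁) :
    ¬ RealRooted (C c₀ * X ^ j + C c₁ * X ^ (j + d)) := by
  obtain ⟨z, hz, him⟩ : ∃ z : ℂ, z ^ d = ((-c₀ / c₁ : ℝ) : ℂ) ∧ z.im ≠ 0 := by
    refine exists_pow_eq_ofReal_and_im_ne_zero ?_
    rcases hd with hd | ⟨hd, hc⟩
    · exact Or.inl ⟨hd, div_ne_zero (neg_ne_zero.2 h₀) h₁⟩
    · exact Or.inr ⟨hd, by rw [neg_div]; exact neg_neg_of_pos (div_pos_iff.2 (mul_pos_iff.1 hc))⟩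
  have hd0 : d ≠ 0 := by omega
  rintro (h0 | hreal)
  · exact h₀ (by simpa [hd0] using congrArg (coeff · j) h0)
  · refine him (hreal z ?_)
    have hc₁ : (c₁ : ℂ) ≠ 0 := Complex.ofReal_ne_zero.2 h₁
    simp only [map_add, map_mul, aeval_C, Complex.coe_algebraMap, aeval_X_pow, pow_add, hz]
    push_cast
    field_simp
    ring

namespace ClassicalMS

variable {γ : ℕ → ℝ}

lemma realRooted_binomial_image (hγ : ClassicalMS γ) {p : ℝ[X]} (hp : RealRooted p)
    {j l : ℕ} (hjl : j < l) (hdeg : p.natDegree ≤ l)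
    (hvan : ∀ t, t ≠ j → t ≠ l → p.coeff t * γ t = 0) :
    RealRooted (C (p.coeff j * γ j) * X ^ j + C (p.coeff l * γ l) * X ^ l) := by
  have hsum : ∑ k ∈ range (l + 1), C (p.coeff k) * X ^ k = p := by
    simp_rw [C_mul_X_pow_eq_monomial]
    exact (p.as_sum_range' (l + 1) (by omega)).symm
  have himage := hγ l p.coeff (by beta_reduce; rwa [hsum])
  rwa [sum_eq_add_of_mem j l (by simp; omega) (by simp) hjl.ne
    fun t _ ht => by rw [hvan t ht.1 ht.2, C_0, zero_mul]] at himage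

lemma mul_nonneg_add_two (hγ : ClassicalMS γ) (k : ℕ) : 0 ≤ γ k * γ (k + 2) := by
  by_contra! h
  set p : ℝ[X] := X ^ k * ((X - C 1) * (X + C 1))
  have hp : RealRooted p :=
    (realRooted_X.pow k).mul ((realRooted_X_sub_C 1).mul (realRooted_X_add_C 1))
  have hp_eq : p = X ^ (k + 2) - X ^ k := by simp only [p, map_one]; ring
  have hvan : ∀ t, t ≠ k → t ≠ k + 2 → p.coeff t * γ t = 0 := fun t h₁ h₂ => by
    simp [hp_eq, coeff_X_pow, h₁, h₂]
  have himage := hγ.realRooted_binomial_image hp (by omega : k < k + 2)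
    (by rw [hp_eq]; compute_degree) hvan
  rw [show p.coeff k = -1 by simp [hp_eq, coeff_X_pow],
    show p.coeff (k + 2) = 1 by simp [hp_eq, coeff_X_pow], neg_one_mul, one_mul] at himage
  exact not_realRooted_C_mul_X_pow_add_C_mul_X_pow (neg_ne_zero.2 (left_ne_zero_of_mul h.ne))
    (right_ne_zero_of_mul h.ne) k (Or.inr ⟨rfl, by linarith⟩) himage

lemma eq_zero_of_gap (hγ : ClassicalMS γ) {j d : ℕ} (hd : 2 ≤ d) (hj : γ j ≠ 0)
    (hmid : ∀ i, 0 < i → i < d → γ (j + i) = 0) : γ (j + d) = 0 := by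
  by_contra hjd
  set p : ℝ[X] := X ^ j * (X + 1) ^ d
  have hp : RealRooted p := by
    simpa [p] using (realRooted_X.pow j).mul ((realRooted_X_add_C 1).pow d)
  have hcoeff (t : ℕ) : p.coeff t = if j ≤ t then (d.choose (t - j) : ℝ) else 0 := by
    simp only [p, coeff_X_pow_mul', coeff_X_add_one_pow]
  have hvan (t : ℕ) (h₁ : t ≠ j) (h₂ : t ≠ j + d) : p.coeff t * γ t = 0 := by
    rw [hcoeff]
    split_ifs with hjt
    · rcases lt_or_gt_of_ne h₂ with ht | ht
      · obtain ⟨i, rfl⟩ := Nat.exists_eq_add_of_le hjt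
        rw [hmid i (by omega) (by omega), mul_zero]
      · rw [Nat.choose_eq_zero_of_lt (by omega), Nat.cast_zero, zero_mul]
    · exact zero_mul _
  have himage := hγ.realRooted_binomial_image hp (by omega : j < j + d)
    (by simp only [p]; compute_degree) hvan
  rw [hcoeff, hcoeff, if_pos le_rfl, if_pos (by omega), Nat.sub_self, Nat.add_sub_cancel_left,
    Nat.choose_zero_right, Nat.choose_self, Nat.cast_one, one_mul, one_mul] at himage
  refine not_realRooted_C_mul_X_pow_add_C_mul_X_pow hj hjd j ?_ himage
  rcases hd.lt_or_eq with hd | rfl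
  · exact Or.inl hd
  · exact Or.inr ⟨rfl, (hγ.mul_nonneg_add_two j).lt_of_ne (mul_ne_zero hj hjd).symm⟩

lemma eq_zero_of_lt_of_succ_eq_zero (hγ : ClassicalMS γ) {j : ℕ} (hj : γ j ≠ 0)
    (hj₁ : γ (j + 1) = 0) {l : ℕ} (hl : j < l) : γ l = 0 := by
  induction l using Nat.strong_induction_on with
  | _ l ih =>
    obtain ⟨d, rfl⟩ := Nat.exists_eq_add_of_le hl.le
    rcases (show d = 1 ∨ 2 ≤ d by omega) with rfl | hd
    · exact hj₁
    · exact hγ.eq_zero_of_gap hd hj fun i hi hid => ih _ (by omega) (by omega)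

lemma ne_zero_of_le_of_le (hγ : ClassicalMS γ) {a b i : ℕ} (ha : γ a ≠ 0) (hb : γ b ≠ 0)
    (hai : a ≤ i) (hib : i ≤ b) : γ i ≠ 0 := by
  induction i, hai using Nat.le_induction with
  | base => exact ha
  | succ i hai ih => exact fun h => hb (hγ.eq_zero_of_lt_of_succ_eq_zero (ih (by omega)) h hib)

lemma mul_pos_add_two_mul (hγ : ClassicalMS γ) {i : ℕ} (hi : γ i ≠ 0) (t : ℕ)
    (ht : γ (i + 2 * t) ≠ 0) : 0 < γ i * γ (i + 2 * t) := by
  induction t with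
  | zero => simpa using mul_self_pos.2 hi
  | succ t ih =>
    have hmid : γ (i + 2 * t) ≠ 0 := hγ.ne_zero_of_le_of_le hi ht (by omega) (by omega)
    have hstep : 0 < γ (i + 2 * t) * γ (i + 2 * (t + 1)) :=
      (hγ.mul_nonneg_add_two _).lt_of_ne (mul_ne_zero hmid ht).symm
    exact mul_pos_of_mul_pos_of_mul_pos (ih hmid) hstep

lemma mul_pos_of_mod_two_eq (hγ : ClassicalMS γ) {j k : ℕ} (hj : γ j ≠ 0) (hk : γ k ≠ 0)
    (hjk : j % 2 = k % 2) : 0 < γ j * γ k := by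
  rcases le_total j k with h | h
  · obtain ⟨t, rfl⟩ : ∃ t, k = j + 2 * t := ⟨(k - j) / 2, by omega⟩
    exact hγ.mul_pos_add_two_mul hj t hk
  · obtain ⟨t, rfl⟩ : ∃ t, j = k + 2 * t := ⟨(j - k) / 2, by omega⟩
    rw [mul_comm]
    exact hγ.mul_pos_add_two_mul hk t hj

lemma mul_pos_of_mul_succ_pos (hγ : ClassicalMS γ) {m j : ℕ} (hm : 0 < γ m * γ (m + 1))
    (hj : γ j ≠ 0) : 0 < γ m * γ j := by
  by_cases hmj : m % 2 = j % 2
  · exact hγ.mul_pos_of_mod_two_eq (left_ne_zero_of_mul hm.ne') hj hmj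
  · exact mul_pos_of_mul_pos_of_mul_pos hm
      (hγ.mul_pos_of_mod_two_eq (right_ne_zero_of_mul hm.ne') hj (by omega))

end ClassicalMS

theorem stmt_10 (γ : ℕ → ℝ) (hγ : ClassicalMS γ) :
    (∀ j k : ℕ, 0 ≤ γ j * γ k) ∨ (∀ k : ℕ, γ k * γ (k + 1) ≤ 0) := by
  refine or_iff_not_imp_right.2 fun hAlt j k => ?_
  obtain ⟨m, hm⟩ : ∃ m, 0 < γ m * γ (m + 1) := by simpa using hAlt
  rcases eq_or_ne (γ j) 0 with hj | hj
  · simp [hj]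
  rcases eq_or_ne (γ k) 0 with hk | hk
  · simp [hk]
  have hmj := hγ.mul_pos_of_mul_succ_pos hm hj
  rw [mul_comm] at hmj
  exact (mul_pos_of_mul_pos_of_mul_pos hmj (hγ.mul_pos_of_mul_succ_pos hm hk)).le
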